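/- arXiv:2404.13283 — 2 statements merged into one kernel-verified Lean document; each statement's English description precedes it below -/
import Mathlib

section
/- Let l₁ > 0, l₂ > 0 and x₀ > 0 be real numbers and let z be a complex number with Re(z) ≥ x₀. Then |cosh(l₁z)·cosh(l₂z)/(sinh(l₁z)·sinh(l₂z)) − 1| ≤ coth(l₁x₀)·coth(l₂x₀) − 1. -/
/-!
Writing `coth a coth b - 1 = cosh (a - b) / (sinh a sinh b)`, the numerator is bounded above and
the denominator below by the real hyperbolic functions of the real parts, since
`|e^w| = e^{Re w}`. This gives `‖coth a coth b - 1‖ ≤ coth (Re a) coth (Re b) - 1`, and `coth` is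
decreasing on `(0, ∞)`.
-/

namespace Complex

lemma norm_cosh_le_cosh_re (w : ℂ) : ‖cosh w‖ ≤ Real.cosh w.re := by
  rw [cosh, Real.cosh_eq, norm_div, Complex.norm_two, ← norm_exp, ← neg_re, ← norm_exp]
  gcongr
  exact norm_add_le _ _

lemma sinh_re_le_norm_sinh (w : ℂ) : Real.sinh w.re ≤ ‖sinh w‖ := by
  rw [sinh, Real.sinh_eq, norm_div, Complex.norm_two, ← norm_exp, ← neg_re, ← norm_exp]
  gcongr
  exact norm_sub_norm_le _ _

lemma sinh_ne_zero_of_re_pos {w : ℂ} (hw : 0 < w.re) : sinh w ≠ 0 := by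
  rw [← norm_pos_iff]
  exact (Real.sinh_pos_iff.2 hw).trans_le (sinh_re_le_norm_sinh w)

lemma norm_cosh_mul_cosh_div_sinh_mul_sinh_sub_one_le {a b : ℂ} (ha : 0 < a.re) (hb : 0 < b.re) :
    ‖cosh a * cosh b / (sinh a * sinh b) - 1‖ ≤
      Real.cosh a.re / Real.sinh a.re * (Real.cosh b.re / Real.sinh b.re) - 1 := by
  have hsa := Real.sinh_pos_iff.2 ha
  have hsb := Real.sinh_pos_iff.2 hb
  have hcomplex : cosh a * cosh b / (sinh a * sinh b) - 1 = cosh (a - b) / (sinh a * sinh b) := by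
    have := sinh_ne_zero_of_re_pos ha
    have := sinh_ne_zero_of_re_pos hb
    rw [cosh_sub]
    field_simp
  have hreal : Real.cosh a.re / Real.sinh a.re * (Real.cosh b.re / Real.sinh b.re) - 1 =
      Real.cosh (a.re - b.re) / (Real.sinh a.re * Real.sinh b.re) := by
    rw [Real.cosh_sub]
    field_simp
  rw [hcomplex, hreal, norm_div, norm_mul, ← sub_re]
  gcongr
  · exact norm_cosh_le_cosh_re _
  · exact sinh_re_le_norm_sinh a
  · exact sinh_re_le_norm_sinh b

end Complex

lemma Real.cosh_div_sinh_le_of_le {a x : ℝ} (ha : 0 < a) (hx : a ≤ x) :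
    cosh x / sinh x ≤ cosh a / sinh a := by
  rw [div_le_div_iff₀ (sinh_pos_iff.2 (ha.trans_le hx)) (sinh_pos_iff.2 ha)]
  have := sinh_nonneg_iff.2 (sub_nonneg.2 hx)
  rw [sinh_sub] at this
  linarith

/-- For `l₁, l₂, x₀ > 0` and `Re(z) ≥ x₀`,
`|cosh(l₁z)cosh(l₂z)/(sinh(l₁z)sinh(l₂z)) − 1| ≤ coth(l₁x₀)coth(l₂x₀) − 1`. -/
theorem stmt14 (l₁ l₂ x₀ : ℝ) (h1 : 0 < l₁) (h2 : 0 < l₂) (h0 : 0 < x₀)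
    (z : ℂ) (hz : x₀ ≤ z.re) :
    ‖Complex.cosh ((l₁ : ℂ) * z) * Complex.cosh ((l₂ : ℂ) * z) /
        (Complex.sinh ((l₁ : ℂ) * z) * Complex.sinh ((l₂ : ℂ) * z)) - 1‖ ≤
      (Real.cosh (l₁ * x₀) / Real.sinh (l₁ * x₀)) *
        (Real.cosh (l₂ * x₀) / Real.sinh (l₂ * x₀)) - 1 := by
  have hre₁ : ((l₁ : ℂ) * z).re = l₁ * z.re := Complex.re_ofReal_mul l₁ z
  have hre₂ : ((l₂ : ℂ) * z).re = l₂ * z.re := Complex.re_ofReal_mul l₂ z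
  have hx₁ : l₁ * x₀ ≤ l₁ * z.re := mul_le_mul_of_nonneg_left hz h1.le
  have hx₂ : l₂ * x₀ ≤ l₂ * z.re := mul_le_mul_of_nonneg_left hz h2.le
  have hpos₁ := mul_pos h1 h0
  have hpos₂ := mul_pos h2 h0
  refine (Complex.norm_cosh_mul_cosh_div_sinh_mul_sinh_sub_one_le
    (hre₁ ▸ hpos₁.trans_le hx₁) (hre₂ ▸ hpos₂.trans_le hx₂)).trans ?_
  rw [hre₁, hre₂, sub_le_sub_iff_right]
  exact mul_le_mul (Real.cosh_div_sinh_le_of_le hpos₁ hx₁) (Real.cosh_div_sinh_le_of_le hpos₂ hx₂)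
    (div_nonneg (Real.cosh_pos _).le (Real.sinh_pos_iff.2 (hpos₂.trans_le hx₂)).le)
    (div_nonneg (Real.cosh_pos _).le (Real.sinh_pos_iff.2 hpos₁).le)
end

section
/- Let l₀, l₁, l₂ > 0 and x₀ > 0 be real numbers, let ρ₁, ρ₂ ≥ 0 be real numbers, and let z be a complex number with Re(z) ≥ x₀. Then |(1/sinh(l₀z))·(ρ₁·cosh(l₁z)/sinh(l₁z) − ρ₂·cosh(l₂z)/sinh(l₂z))| ≤ (1/sinh(l₀x₀))·(ρ₁·coth(l₁x₀) + ρ₂·coth(l₂x₀)). -/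
/-!
Writing `z = x + iy`, one has `|sinh z|² = sinh² x + sin² y ≥ sinh² x` and
`|cosh z|² = sinh² x + cos² y`, from which `|coth z| ≤ coth x` for `x > 0`. Since `sinh` is
increasing and `coth` decreasing on `(0, ∞)`, both bounds only improve when `x` is replaced by a
smaller positive number, and the theorem follows from the triangle inequality.
-/

open Complex in
theorem Complex.sinh_eq_re_add_im_mul_I (z : ℂ) :
    sinh z = (Real.sinh z.re * Real.cos z.im : ℝ) + (Real.cosh z.re * Real.sin z.im : ℝ) * I := by
  conv_lhs => rw [← re_add_im z]
  rw [sinh_add, sinh_mul_I, cosh_mul_I]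
  push_cast
  ring

open Complex in
theorem Complex.cosh_eq_re_add_im_mul_I (z : ℂ) :
    cosh z = (Real.cosh z.re * Real.cos z.im : ℝ) + (Real.sinh z.re * Real.sin z.im : ℝ) * I := by
  conv_lhs => rw [← re_add_im z]
  rw [cosh_add, sinh_mul_I, cosh_mul_I]
  push_cast
  ring

theorem Complex.norm_sinh_sq (z : ℂ) :
    ‖Complex.sinh z‖ ^ 2 = Real.sinh z.re ^ 2 + Real.sin z.im ^ 2 := by
  rw [Complex.sq_norm, Complex.sinh_eq_re_add_im_mul_I, Complex.normSq_add_mul_I]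
  linear_combination (Real.sin z.im ^ 2) * Real.cosh_sq z.re +
    Real.sinh z.re ^ 2 * Real.sin_sq_add_cos_sq z.im

theorem Complex.norm_cosh_sq (z : ℂ) :
    ‖Complex.cosh z‖ ^ 2 = Real.sinh z.re ^ 2 + Real.cos z.im ^ 2 := by
  rw [Complex.sq_norm, Complex.cosh_eq_re_add_im_mul_I, Complex.normSq_add_mul_I]
  linear_combination (Real.cos z.im ^ 2) * Real.cosh_sq z.re +
    Real.sinh z.re ^ 2 * Real.sin_sq_add_cos_sq z.im

theorem Complex.sinh_re_le_norm_sinh_s17 (z : ℂ) :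
    Real.sinh z.re ≤ ‖Complex.sinh z‖ := by
  refine le_of_sq_le_sq ?_ (norm_nonneg _)
  rw [Complex.norm_sinh_sq]
  nlinarith [sq_nonneg (Real.sin z.im)]

theorem Complex.sinh_le_norm_sinh {x : ℝ} {z : ℂ} (hxz : x ≤ z.re) :
    Real.sinh x ≤ ‖Complex.sinh z‖ :=
  (Real.sinh_le_sinh.mpr hxz).trans (Complex.sinh_re_le_norm_sinh_s17 z)

theorem Complex.norm_cosh_div_sinh_le {z : ℂ} (hz : 0 < z.re) :
    ‖Complex.cosh z / Complex.sinh z‖ ≤ Real.cosh z.re / Real.sinh z.re := by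
  have hs : 0 < Real.sinh z.re := Real.sinh_pos_iff.mpr hz
  have hns : 0 < ‖Complex.sinh z‖ := hs.trans_le (Complex.sinh_re_le_norm_sinh_s17 z)
  rw [norm_div, div_le_div_iff₀ hns hs]
  refine le_of_sq_le_sq ?_ (by positivity)
  rw [mul_pow, mul_pow, Complex.norm_sinh_sq, Complex.norm_cosh_sq, Real.cosh_sq]
  nlinarith [Real.sin_sq_add_cos_sq z.im, sq_nonneg (Real.sin z.im), sq_nonneg (Real.sinh z.re),
    mul_nonneg (sq_nonneg (Real.sinh z.re)) (sq_nonneg (Real.sin z.im))]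

theorem Real.cosh_div_sinh_antitoneOn :
    AntitoneOn (fun x => Real.cosh x / Real.sinh x) (Set.Ioi 0) := by
  intro a ha b hb hab
  have hsa : 0 < Real.sinh a := Real.sinh_pos_iff.mpr ha
  have hsb : 0 < Real.sinh b := Real.sinh_pos_iff.mpr hb
  dsimp only
  rw [div_le_div_iff₀ hsb hsa]
  have h : 0 ≤ Real.sinh (b - a) := Real.sinh_nonneg_iff.mpr (sub_nonneg.mpr hab)
  rw [Real.sinh_sub] at h
  linarith

theorem Complex.norm_cosh_div_sinh_le_of_le {x : ℝ} {z : ℂ} (hx : 0 < x) (hxz : x ≤ z.re) :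
    ‖Complex.cosh z / Complex.sinh z‖ ≤ Real.cosh x / Real.sinh x :=
  (Complex.norm_cosh_div_sinh_le (hx.trans_le hxz)).trans
    (Real.cosh_div_sinh_antitoneOn hx (hx.trans_le hxz) hxz)

/-- For `l₀, l₁, l₂, x₀ > 0`, `ρ₁, ρ₂ ≥ 0` and `Re(z) ≥ x₀`,
`|(1/sinh(l₀z))(ρ₁ cosh(l₁z)/sinh(l₁z) − ρ₂ cosh(l₂z)/sinh(l₂z))|
  ≤ (1/sinh(l₀x₀))(ρ₁ coth(l₁x₀) + ρ₂ coth(l₂x₀))`. -/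
theorem stmt17 (l₀ l₁ l₂ x₀ : ℝ) (h0' : 0 < l₀) (h1 : 0 < l₁) (h2 : 0 < l₂) (h0 : 0 < x₀)
    (ρ₁ ρ₂ : ℝ) (hρ₁ : 0 ≤ ρ₁) (hρ₂ : 0 ≤ ρ₂)
    (z : ℂ) (hz : x₀ ≤ z.re) :
    ‖(1 / Complex.sinh ((l₀ : ℂ) * z)) *
        ((ρ₁ : ℂ) * Complex.cosh ((l₁ : ℂ) * z) / Complex.sinh ((l₁ : ℂ) * z) -
         (ρ₂ : ℂ) * Complex.cosh ((l₂ : ℂ) * z) / Complex.sinh ((l₂ : ℂ) * z))‖ ≤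
      (1 / Real.sinh (l₀ * x₀)) *
        (ρ₁ * (Real.cosh (l₁ * x₀) / Real.sinh (l₁ * x₀)) +
         ρ₂ * (Real.cosh (l₂ * x₀) / Real.sinh (l₂ * x₀))) := by
  have hre : ∀ {l : ℝ}, 0 < l → l * x₀ ≤ ((l : ℂ) * z).re := fun hl => by
    rw [Complex.re_ofReal_mul]
    exact mul_le_mul_of_nonneg_left hz hl.le
  have hsinh : Real.sinh (l₀ * x₀) ≤ ‖Complex.sinh ((l₀ : ℂ) * z)‖ :=
    Complex.sinh_le_norm_sinh (hre h0')
  have hcoth : ∀ {l ρ : ℝ}, 0 < l → 0 ≤ ρ →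
      ‖(ρ : ℂ) * Complex.cosh ((l : ℂ) * z) / Complex.sinh ((l : ℂ) * z)‖ ≤
        ρ * (Real.cosh (l * x₀) / Real.sinh (l * x₀)) := fun hl hρ => by
    rw [mul_div_assoc, norm_mul, Complex.norm_of_nonneg hρ]
    exact mul_le_mul_of_nonneg_left
      (Complex.norm_cosh_div_sinh_le_of_le (by positivity) (hre hl)) hρ
  rw [norm_mul, norm_div, norm_one]
  gcongr
  exact (norm_sub_le _ _).trans (add_le_add (hcoth h1 hρ₁) (hcoth h2 hρ₂))
end
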